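/- Let ρ be a density matrix, σ a positive semidefinite matrix of the same size, and let ε, ε' be reals with ε > ε' ≥ 0 and ε ≤ 1. Then D_H^ε(ρ‖σ) ≤ D_max^{ε'}(ρ‖σ) + log₂(ε/(ε − ε')). -/

import Mathlib

open scoped BigOperators ComplexOrder
open Matrix Filter MeasureTheory

noncomputable section

namespace QMarkov

variable {ι : Type*}

/-- Positive semidefinite square root of a matrix (junk value `0` if not PSD). -/
noncomputable def matSqrt [Fintype ι] (A : Matrix ι ι ℂ) : Matrix ι ι ℂ := by
  classical exact if h : A.PosSemidef then
      (h.1.eigenvectorUnitary : Matrix ι ι ℂ) *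
        Matrix.diagonal ((↑) ∘ Real.sqrt ∘ h.1.eigenvalues) *
        (star h.1.eigenvectorUnitary : Matrix ι ι ℂ)
    else 0

/-- Trace norm (sum of singular values). -/
noncomputable def traceNorm [Fintype ι] (A : Matrix ι ι ℂ) : ℝ :=
  (matSqrt (Aᴴ * A)).trace.re

/-- Fidelity `F(ρ,σ) = ‖√ρ √σ‖₁`. -/
noncomputable def fid [Fintype ι] (ρ σ : Matrix ι ι ℂ) : ℝ :=
  traceNorm (matSqrt ρ * matSqrt σ)

/-- Generalized trace distance `Δ(ρ,σ) = ½‖ρ-σ‖₁ + ½|tr(ρ-σ)|`. -/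
noncomputable def tdist [Fintype ι] (ρ σ : Matrix ι ι ℂ) : ℝ :=
  (1 / 2) * traceNorm (ρ - σ) + (1 / 2) * ‖(ρ - σ).trace‖

/-- Von Neumann entropy `H(ρ) = -∑ᵢ λᵢ log₂ λᵢ` (junk `0` if not Hermitian);
the convention `0 · log₂ 0 = 0` is automatic since `Real.logb 2 0 = 0`. -/
noncomputable def vnEntropy [Fintype ι] (A : Matrix ι ι ℂ) : ℝ := by
  classical exact
    if h : A.IsHermitian then -∑ i, h.eigenvalues i * Real.logb 2 (h.eigenvalues i) else 0

/-- Matrix base-2 logarithm on the support of a Hermitian matrix (junk `0` if not Hermitian). -/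
noncomputable def mlog [Fintype ι] (A : Matrix ι ι ℂ) : Matrix ι ι ℂ := by
  classical exact
    if h : A.IsHermitian then
      (h.eigenvectorUnitary : Matrix ι ι ℂ) *
        Matrix.diagonal (fun i => (Real.logb 2 (h.eigenvalues i) : ℂ)) *
        (h.eigenvectorUnitary : Matrix ι ι ℂ)ᴴ
    else 0

/-- Square root of the Moore–Penrose pseudoinverse of a Hermitian PSD matrix
(junk `0` if not Hermitian). -/
noncomputable def pinvSqrt [Fintype ι] (A : Matrix ι ι ℂ) : Matrix ι ι ℂ := by
  classical exact
    if h : A.IsHermitian then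
      (h.eigenvectorUnitary : Matrix ι ι ℂ) *
        Matrix.diagonal (fun i => ((Real.sqrt (h.eigenvalues i))⁻¹ : ℂ)) *
        (h.eigenvectorUnitary : Matrix ι ι ℂ)ᴴ
    else 0

/-- Relative entropy `D(ρ‖σ)`, equal to `tr(ρ(log₂ρ - log₂σ))/tr ρ` when the support of
`ρ` is contained in the support of `σ`, and `+∞` otherwise. -/
noncomputable def relEnt [Fintype ι] (ρ σ : Matrix ι ι ℂ) : EReal := by
  classical exact
    if ∀ v : ι → ℂ, σ *ᵥ v = 0 → ρ *ᵥ v = 0 then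
      (((ρ * (mlog ρ - mlog σ)).trace.re / ρ.trace.re : ℝ) : EReal)
    else ⊤

/-- `n`-fold tensor power of a matrix. -/
def tpow (A : Matrix ι ι ℂ) (n : ℕ) : Matrix (Fin n → ι) (Fin n → ι) ℂ :=
  Matrix.of fun x y => ∏ i, A (x i) (y i)

/-- Permutation invariance of a matrix on an `n`-fold tensor power space. -/
def permInv {n : ℕ} (ρ : Matrix (Fin n → ι) (Fin n → ι) ℂ) : Prop :=
  ∀ π : Equiv.Perm (Fin n), ∀ x y, ρ (x ∘ π) (y ∘ π) = ρ x y

/-- Rank-one projector `|φ⟩⟨φ|`. -/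
def vecOuter (φ : ι → ℂ) : Matrix ι ι ℂ :=
  Matrix.of fun i j => φ i * star (φ j)

variable {A B C D E : Type*}

/-- Partial trace over the second factor. -/
def ptr2 [Fintype E] (M : Matrix (D × E) (D × E) ℂ) : Matrix D D ℂ :=
  Matrix.of fun d d' => ∑ e, M (d, e) (d', e)

/-- Partial trace over the `n` copies of `E` of a matrix on `(D ⊗ E)^⊗n`. -/
def ptrPow [Fintype E] {n : ℕ} (M : Matrix (Fin n → D × E) (Fin n → D × E) ℂ) :
    Matrix (Fin n → D) (Fin n → D) ℂ :=
  Matrix.of fun x y => ∑ e : Fin n → E, M (fun i => (x i, e i)) (fun i => (y i, e i))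

/-- Marginal `ρ_AB` of a tripartite matrix. -/
def margAB [Fintype C] (ρ : Matrix (A × B × C) (A × B × C) ℂ) : Matrix (A × B) (A × B) ℂ :=
  Matrix.of fun x y => ∑ c, ρ (x.1, x.2, c) (y.1, y.2, c)

/-- Marginal `ρ_BC` of a tripartite matrix. -/
def margBC [Fintype A] (ρ : Matrix (A × B × C) (A × B × C) ℂ) : Matrix (B × C) (B × C) ℂ :=
  Matrix.of fun x y => ∑ a, ρ (a, x.1, x.2) (a, y.1, y.2)

/-- Marginal `ρ_B` of a tripartite matrix. -/
def margB [Fintype A] [Fintype C] (ρ : Matrix (A × B × C) (A × B × C) ℂ) : Matrix B B ℂ :=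
  Matrix.of fun b b' => ∑ a, ∑ c, ρ (a, b, c) (a, b', c)

/-- Conditional mutual information `I(A:C|B)_ρ = H(ρ_AB) + H(ρ_BC) - H(ρ_B) - H(ρ_ABC)`. -/
noncomputable def cmi [Fintype A] [Fintype B] [Fintype C]
    (ρ : Matrix (A × B × C) (A × B × C) ℂ) : ℝ :=
  vnEntropy (margAB ρ) + vnEntropy (margBC ρ) - vnEntropy (margB ρ) - vnEntropy ρ

/-- Application of `I_A ⊗ T` to a matrix on `A ⊗ B`, for `T` a map from matrices over `B`
to matrices over `B ⊗ C`. -/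
def extT (T : Matrix B B ℂ → Matrix (B × C) (B × C) ℂ)
    (ρ : Matrix (A × B) (A × B) ℂ) : Matrix (A × B × C) (A × B × C) ℂ :=
  Matrix.of fun x y => T (Matrix.of fun b b' => ρ (x.1, b) (y.1, b')) x.2 y.2

/-- `M ⊗ id` on `B ⊗ C`. -/
def kronId (M : Matrix B B ℂ) : Matrix (B × C) (B × C) ℂ := by
  classical exact Matrix.of fun x y => if x.2 = y.2 then M x.1 y.1 else 0

end QMarkov

namespace QMarkov
variable {A B C : Type*}

/-- Marginal on the first and third factors of a tripartite matrix. -/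
def marg13 [Fintype B] (ρ : Matrix (A × B × C) (A × B × C) ℂ) : Matrix (A × C) (A × C) ℂ :=
  Matrix.of fun x y => ∑ b, ρ (x.1, b, x.2) (y.1, b, y.2)

/-- Marginal on the third factor of a tripartite matrix. -/
def marg3 [Fintype A] [Fintype B] (ρ : Matrix (A × B × C) (A × B × C) ℂ) : Matrix C C ℂ :=
  Matrix.of fun c c' => ∑ a, ∑ b, ρ (a, b, c) (a, b, c')

/-- Conditional mutual information `I(first : second | third)` of a tripartite matrix, i.e.
for `ρ` on `A ⊗ C ⊗ E` this is `I(A:C|E)_ρ = H(ρ_AE) + H(ρ_CE) - H(ρ_E) - H(ρ_ACE)`. -/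
noncomputable def cmi13 [Fintype A] [Fintype B] [Fintype C]
    (ρ : Matrix (A × B × C) (A × B × C) ℂ) : ℝ :=
  vnEntropy (marg13 ρ) + vnEntropy (margBC ρ) - vnEntropy (marg3 ρ) - vnEntropy ρ

end QMarkov
namespace QMarkov

/-- The set defining the generalized relative entropy: values `tr(Qσ)/ε` over tests
`0 ≤ Q ≤ id` with `tr(Qρ) ≥ ε`. -/
def DHset {ι : Type*} [Fintype ι] [DecidableEq ι] (ε : ℝ) (ρ σ : Matrix ι ι ℂ) : Set ℝ :=
  {x | ∃ Q : Matrix ι ι ℂ, Q.PosSemidef ∧ (1 - Q).PosSemidef ∧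
    ε ≤ (Q * ρ).trace.re ∧ x = (Q * σ).trace.re / ε}

/-- Generalized relative entropy `D_H^ε(ρ‖σ)`, defined by `2^{-D_H^ε} = inf tr(Qσ)/ε`
(and `⊤` when the infimum is `0`, corresponding to `2^{-D} = 0`). -/
noncomputable def DH {ι : Type*} [Fintype ι] [DecidableEq ι] (ε : ℝ)
    (ρ σ : Matrix ι ι ℂ) : EReal := by
  classical exact
    if 0 < sInf (DHset ε ρ σ) then ((-Real.logb 2 (sInf (DHset ε ρ σ)) : ℝ) : EReal) else ⊤

/-- The set defining the smooth max-relative entropy: scalars `μ ≥ 0` with `μ ρ̄ ≤ σ` for some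
subnormalized PSD `ρ̄` with `1 - F(ρ̄,ρ)² ≤ ε²`. -/
def DmaxSet {ι : Type*} [Fintype ι] (ε : ℝ) (ρ σ : Matrix ι ι ℂ) : Set ℝ :=
  {m | 0 ≤ m ∧ ∃ ρbar : Matrix ι ι ℂ, ρbar.PosSemidef ∧ ρbar.trace.re ≤ 1 ∧
    (σ - m • ρbar).PosSemidef ∧ 1 - fid ρbar ρ ^ 2 ≤ ε ^ 2}

/-- Smooth max-relative entropy `D_max^ε(ρ‖σ)`, defined by `2^{-D_max^ε} = sup` of the above
(and `⊤` when the supremum is `0`, corresponding to `2^{-D} = 0`). -/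
noncomputable def Dmax {ι : Type*} [Fintype ι] (ε : ℝ) (ρ σ : Matrix ι ι ℂ) : EReal := by
  classical exact
    if 0 < sSup (DmaxSet ε ρ σ) then ((-Real.logb 2 (sSup (DmaxSet ε ρ σ)) : ℝ) : EReal) else ⊤


/-! If `μ ρ' ≤ σ` for some `ρ'` with `1 - F(ρ', ρ)² ≤ ε'²`, and `Q` is a test with
`tr(Qρ) ≥ ε`, then `tr(Qσ) ≥ μ tr(Qρ') ≥ μ (ε - ε')`; taking the supremum over `μ` and the
infimum over `Q` gives the claim. The middle inequality holds because measuring with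
`{Q, 1 - Q}` does not decrease the fidelity, and two Bernoulli distributions with parameters
`p, q` satisfy `(p - q)² + (√(pq) + √((1-p)(1-q)))² ≤ 1`. Monotonicity of the fidelity under the
measurement comes from writing `‖√ρ' √ρ‖₁ = re tr(√ρ' √ρ U)` for a contraction `U` and applying
Cauchy–Schwarz to the two halves of `√ρ' (Q + (1 - Q)) √ρ U`. -/

open scoped MatrixOrder

section
variable {ι : Type*} [Fintype ι] [DecidableEq ι]

lemma matSqrt_eq_sqrt {A : Matrix ι ι ℂ} (hA : A.PosSemidef) : matSqrt A = CFC.sqrt A := by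
  rw [CFC.sqrt_eq_real_sqrt A hA.nonneg, cfcₙ_eq_cfc (hf0 := Real.sqrt_zero), matSqrt,
    dif_pos hA, hA.1.cfc_eq, IsHermitian.cfc, Unitary.conjStarAlgAut_apply]
  -- `matSqrt` builds its `diagonal` with the classical `DecidableEq` instance
  congr 2
  convert rfl <;> rfl

lemma fid_nonneg (ρ σ : Matrix ι ι ℂ) : 0 ≤ fid ρ σ := by
  have hH := posSemidef_conjTranspose_mul_self (matSqrt ρ * matSqrt σ)
  rw [fid, traceNorm, matSqrt_eq_sqrt hH]
  exact (Complex.nonneg_iff.mp (CFC.sqrt_nonneg _).posSemidef.trace_nonneg).1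

lemma re_trace_mul_nonneg {A B : Matrix ι ι ℂ} (hA : A.PosSemidef) (hB : B.PosSemidef) :
    0 ≤ (A * B).trace.re := by
  obtain ⟨C, rfl⟩ := CStarAlgebra.nonneg_iff_eq_star_mul_self.mp hB.nonneg
  rw [star_eq_conjTranspose, ← Matrix.mul_assoc, trace_mul_cycle]
  exact (Complex.nonneg_iff.mp (hA.mul_mul_conjTranspose_same C).trace_nonneg).1

lemma re_trace_mul_mul_conjTranspose_le {P : Matrix ι ι ℂ} (hP : P ≤ 1) (W : Matrix ι ι ℂ) :
    (W * P * Wᴴ).trace.re ≤ (W * Wᴴ).trace.re := by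
  have h := (hP : (1 - P).PosSemidef).mul_mul_conjTranspose_same W
  rw [Matrix.mul_sub, Matrix.sub_mul, Matrix.mul_one] at h
  simpa [sub_nonneg] using (Complex.nonneg_iff.mp h.trace_nonneg).1

lemma re_trace_mul_conjTranspose_le (X Y : Matrix ι ι ℂ) :
    (Y * Xᴴ).trace.re ≤ √(X * Xᴴ).trace.re * √(Y * Yᴴ).trace.re := by
  let := toMatrixSeminormedAddCommGroup (1 : Matrix ι ι ℂ) PosSemidef.one
  let := toMatrixInnerProductSpace (1 : Matrix ι ι ℂ) PosSemidef.one
  have h := re_inner_le_norm (𝕜 := ℂ) X Y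
  rw [norm_eq_sqrt_re_inner (𝕜 := ℂ) X, norm_eq_sqrt_re_inner (𝕜 := ℂ) Y] at h
  change (Y * 1 * Xᴴ).trace.re ≤ √(X * 1 * Xᴴ).trace.re * √(Y * 1 * Yᴴ).trace.re at h
  simpa only [Matrix.mul_one] using h

/-- Polar decomposition: `U = |M|⁺ Mᴴ`, with `|M|⁺` the pseudo-inverse of `|M| = √(Mᴴ M)`,
is a contraction with `U M = |M|`. -/
lemma exists_traceNorm_eq_re_trace_mul (M : Matrix ι ι ℂ) :
    ∃ U : Matrix ι ι ℂ, U * Uᴴ ≤ 1 ∧ traceNorm M = (M * U).trace.re := by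
  set H := Mᴴ * M
  have hH : H.PosSemidef := posSemidef_conjTranspose_mul_self M
  set S := cfc (fun x : ℝ => (√x)⁻¹) H
  have hS : Sᴴ = S := (cfc_predicate _ H : IsSelfAdjoint S)
  have hcont (f : ℝ → ℝ) : ContinuousOn f (spectrum ℝ H) := finite_real_spectrum.continuousOn f
  refine ⟨S * Mᴴ, ?_, ?_⟩
  · have hUU : S * Mᴴ * (S * Mᴴ)ᴴ = cfc (fun x : ℝ => (√x)⁻¹ * x * (√x)⁻¹) H := by
      rw [cfc_mul _ _ _ (hcont _) (hcont _), cfc_mul _ _ _ (hcont _) (hcont _),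
        cfc_id' ℝ H hH.1.isSelfAdjoint, conjTranspose_mul, conjTranspose_conjTranspose, hS]
      simp only [H, Matrix.mul_assoc]
      rfl
    rw [hUU]
    refine cfc_le_one _ _ fun x _ => ?_
    rcases le_or_gt x 0 with hx | hx
    · simp [Real.sqrt_eq_zero'.mpr hx]
    · rw [mul_comm, ← mul_assoc, ← mul_inv, Real.mul_self_sqrt hx.le, inv_mul_cancel₀ hx.ne']
  · have hsqrt : Real.sqrt = fun x => (√x)⁻¹ * x := by
      funext x
      rcases le_or_gt x 0 with hx | hx
      · simp [Real.sqrt_eq_zero'.mpr hx]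
      · rw [eq_inv_mul_iff_mul_eq₀ (Real.sqrt_pos.2 hx).ne', Real.mul_self_sqrt hx.le]
    have hUM : S * Mᴴ * M = CFC.sqrt H := by
      rw [CFC.sqrt_eq_real_sqrt H hH.nonneg, cfcₙ_eq_cfc (hf0 := Real.sqrt_zero), hsqrt,
        cfc_mul _ _ _ (hcont _) (hcont _), cfc_id' ℝ H hH.1.isSelfAdjoint, Matrix.mul_assoc]
    rw [traceNorm, matSqrt_eq_sqrt hH, ← hUM, trace_mul_comm M]

lemma re_trace_mul_le_of_mul_conjTranspose_le_one {U B C Q : Matrix ι ι ℂ} (hU : U * Uᴴ ≤ 1)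
    (hB : B.IsHermitian) (hC : C.IsHermitian) (hQ : Q.PosSemidef) :
    (B * Q * C * U).trace.re ≤ √(B * B * Q).trace.re * √(C * C * Q).trace.re := by
  set R := CFC.sqrt Q
  have hR : Rᴴ = R := (CFC.sqrt_nonneg Q).posSemidef.1
  have hRR : R * R = Q := CFC.sqrt_mul_sqrt_self Q hQ.nonneg
  have hsandwich : ∀ A : Matrix ι ι ℂ, A.IsHermitian →
      (R * A * (R * A)ᴴ).trace = (A * A * Q).trace := fun A hA => by
    rw [conjTranspose_mul, hR, hA.eq, Matrix.mul_assoc, trace_mul_comm, ← hRR]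
    simp only [Matrix.mul_assoc]
  have hcycle : (B * Q * C * U).trace = (R * C * U * (R * B)ᴴ).trace := by
    rw [conjTranspose_mul, hR, hB.eq, ← hRR,
      show B * (R * R) * C * U = B * R * (R * C * U) by simp only [Matrix.mul_assoc],
      trace_mul_comm]
  have hY : (R * C * U * (R * C * U)ᴴ).trace.re ≤ (C * C * Q).trace.re := by
    calc (R * C * U * (R * C * U)ᴴ).trace.re = (R * C * (U * Uᴴ) * (R * C)ᴴ).trace.re := by
          rw [conjTranspose_mul (R * C) U]; simp only [Matrix.mul_assoc]
      _ ≤ (R * C * (R * C)ᴴ).trace.re := re_trace_mul_mul_conjTranspose_le hU (R * C)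
      _ = (C * C * Q).trace.re := by rw [hsandwich C hC]
  calc (B * Q * C * U).trace.re
      ≤ √(R * B * (R * B)ᴴ).trace.re * √(R * C * U * (R * C * U)ᴴ).trace.re := by
        rw [hcycle]; exact re_trace_mul_conjTranspose_le _ _
    _ ≤ _ := by
        rw [hsandwich B hB]; gcongr

/-- The fidelity does not increase under the two-outcome measurement `{Q, 1 - Q}`. -/
lemma fid_le_of_measurement {ρ σ Q : Matrix ι ι ℂ} (hρ : ρ.PosSemidef) (hσ : σ.PosSemidef)
    (hQ : Q.PosSemidef) (hQ1 : Q ≤ 1) :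
    fid ρ σ ≤ √(Q * ρ).trace.re * √(Q * σ).trace.re
      + √((1 - Q) * ρ).trace.re * √((1 - Q) * σ).trace.re := by
  rw [fid, matSqrt_eq_sqrt hρ, matSqrt_eq_sqrt hσ]
  obtain ⟨U, hU, hUM⟩ := exists_traceNorm_eq_re_trace_mul (CFC.sqrt ρ * CFC.sqrt σ)
  set B := CFC.sqrt ρ
  set C := CFC.sqrt σ
  have hBB : B * B = ρ := CFC.sqrt_mul_sqrt_self ρ hρ.nonneg
  have hCC : C * C = σ := CFC.sqrt_mul_sqrt_self σ hσ.nonneg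
  have hsplit : B * C * U = B * Q * C * U + B * (1 - Q) * C * U := by
    rw [← add_mul, ← add_mul, ← Matrix.mul_add, add_sub_cancel, Matrix.mul_one]
  rw [hUM, hsplit, trace_add, Complex.add_re, trace_mul_comm Q, trace_mul_comm Q,
    trace_mul_comm (1 - Q), trace_mul_comm (1 - Q), ← hBB, ← hCC]
  have hB : B.IsHermitian := (CFC.sqrt_nonneg ρ).posSemidef.1
  have hC : C.IsHermitian := (CFC.sqrt_nonneg σ).posSemidef.1
  exact add_le_add (re_trace_mul_le_of_mul_conjTranspose_le_one hU hB hC hQ)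
    (re_trace_mul_le_of_mul_conjTranspose_le_one hU hB hC hQ1)

lemma sq_sub_add_sq_sqrt_mul_add_sqrt_mul_le_one {p q : ℝ} (hp0 : 0 ≤ p) (hp1 : p ≤ 1)
    (hq0 : 0 ≤ q) (hq1 : q ≤ 1) :
    (p - q) ^ 2 + (√q * √p + √(1 - q) * √(1 - p)) ^ 2 ≤ 1 := by
  have ha := Real.sq_sqrt hp0
  have hb := Real.sq_sqrt hq0
  have hc := Real.sq_sqrt (sub_nonneg.2 hp1)
  have hd := Real.sq_sqrt (sub_nonneg.2 hq1)
  set a := √p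
  set b := √q
  set c := √(1 - p)
  set d := √(1 - q)
  have hsum : (b * a + d * c) ^ 2 + (a * d - b * c) ^ 2 = 1 := by
    linear_combination (b ^ 2 + d ^ 2) * ha + (b ^ 2 + d ^ 2) * hc + hb + hd
  have hcs : (a * d + b * c) ^ 2 ≤ 1 := by
    nlinarith [sq_nonneg (a * b - c * d)]
  have hdiff : p - q = (a * d - b * c) * (a * d + b * c) := by
    linear_combination -d ^ 2 * ha - p * hd + c ^ 2 * hb + q * hc
  rw [hdiff, mul_pow]
  nlinarith [sq_nonneg (a * d - b * c)]

lemma re_trace_one_sub_mul (Q ρ : Matrix ι ι ℂ) :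
    ((1 - Q) * ρ).trace.re = ρ.trace.re - (Q * ρ).trace.re := by
  rw [Matrix.sub_mul, Matrix.one_mul, trace_sub, Complex.sub_re]

lemma re_trace_mul_sub_le_of_fid {ρ ρ' Q : Matrix ι ι ℂ} (hρ : ρ.PosSemidef) (hρtr : ρ.trace = 1)
    (hρ' : ρ'.PosSemidef) (hρ'tr : ρ'.trace.re ≤ 1) {ε' : ℝ} (hε' : 0 ≤ ε')
    (hF : 1 - fid ρ' ρ ^ 2 ≤ ε' ^ 2) (hQ : Q.PosSemidef) (hQ1 : Q ≤ 1) :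
    (Q * ρ).trace.re - (Q * ρ').trace.re ≤ ε' := by
  set p := (Q * ρ).trace.re
  set q := (Q * ρ').trace.re
  have hp0 : 0 ≤ p := re_trace_mul_nonneg hQ hρ
  have hq0 : 0 ≤ q := re_trace_mul_nonneg hQ hρ'
  have hp1 := re_trace_mul_nonneg hQ1 hρ
  have hq1 := re_trace_mul_nonneg hQ1 hρ'
  rw [re_trace_one_sub_mul, hρtr, Complex.one_re] at hp1
  rw [re_trace_one_sub_mul] at hq1
  have hmeas := fid_le_of_measurement hρ' hρ hQ hQ1
  rw [re_trace_one_sub_mul, re_trace_one_sub_mul, hρtr, Complex.one_re] at hmeas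
  have hmeas' : fid ρ' ρ ≤ √q * √p + √(1 - q) * √(1 - p) := by
    refine hmeas.trans (add_le_add_right (mul_le_mul_of_nonneg_right ?_ (Real.sqrt_nonneg _)) _)
    exact Real.sqrt_le_sqrt (by linarith)
  have hF0 := fid_nonneg ρ' ρ
  have hbound := sq_sub_add_sq_sqrt_mul_add_sqrt_mul_le_one hp0 (by linarith) hq0 (by linarith)
  have hsq : (p - q) ^ 2 ≤ ε' ^ 2 := by nlinarith [pow_le_pow_left₀ hF0 hmeas' 2]
  nlinarith

lemma mul_sub_le_re_trace_mul_of_mem_DmaxSet {ρ σ Q : Matrix ι ι ℂ} (hρ : ρ.PosSemidef)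
    (hρtr : ρ.trace = 1) {ε ε' m : ℝ} (hε' : 0 ≤ ε') (hm : m ∈ DmaxSet ε' ρ σ)
    (hQ : Q.PosSemidef) (hQ1 : Q ≤ 1) (hQρ : ε ≤ (Q * ρ).trace.re) :
    m * (ε - ε') ≤ (Q * σ).trace.re := by
  obtain ⟨hm0, ρ', hρ', hρ'tr, hσρ', hF⟩ := hm
  have hclose := re_trace_mul_sub_le_of_fid hρ hρtr hρ' hρ'tr hε' hF hQ hQ1
  have hdom := re_trace_mul_nonneg hQ hσρ'
  rw [Matrix.mul_sub, Matrix.mul_smul, trace_sub, trace_smul, Complex.sub_re, Complex.real_smul,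
    Complex.re_ofReal_mul, sub_nonneg] at hdom
  calc m * (ε - ε') ≤ m * (Q * ρ').trace.re := by gcongr; linarith
    _ ≤ (Q * σ).trace.re := hdom

lemma sSup_DmaxSet_mul_le_sInf_DHset {ρ σ : Matrix ι ι ℂ} (hρ : ρ.PosSemidef) (hρtr : ρ.trace = 1)
    {ε ε' : ℝ} (hε' : 0 ≤ ε') (hεε' : ε' < ε) (hε1 : ε ≤ 1) (hne : (DmaxSet ε' ρ σ).Nonempty) :
    sSup (DmaxSet ε' ρ σ) * (ε - ε') / ε ≤ sInf (DHset ε ρ σ) := by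
  have hε : 0 < ε := hε'.trans_lt hεε'
  have hεε'' : 0 < ε - ε' := sub_pos.2 hεε'
  refine le_csInf ⟨_, 1, .one, by simpa using .zero, by simpa [hρtr] using hε1, rfl⟩ ?_
  rintro _ ⟨Q, hQ, hQ1, hQρ, rfl⟩
  gcongr
  rw [← le_div_iff₀ hεε'']
  refine csSup_le hne fun m hm => (le_div_iff₀ hεε'').2 ?_
  exact mul_sub_le_re_trace_mul_of_mem_DmaxSet hρ hρtr hε' hm hQ hQ1 hQρ

end

theorem DH_le_Dmax_general
    {ι : Type*} [Fintype ι] [DecidableEq ι]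
    (ρ σ : Matrix ι ι ℂ) (hρ : ρ.PosSemidef) (hρtr : ρ.trace = 1)
    (ε ε' : ℝ) (hε' : 0 ≤ ε') (hεε' : ε' < ε) (hε1 : ε ≤ 1) :
    DH ε ρ σ ≤ Dmax ε' ρ σ + ((Real.logb 2 (ε / (ε - ε')) : ℝ) : EReal) := by
  set S := sSup (DmaxSet ε' ρ σ)
  by_cases hS : 0 < S
  · have hne : (DmaxSet ε' ρ σ).Nonempty :=
      Set.nonempty_iff_ne_empty.2 fun h => by simp [S, h] at hS
    have hε : 0 < ε := hε'.trans_lt hεε'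
    have hεε'' : 0 < ε - ε' := sub_pos.2 hεε'
    have hc : 0 < S * (ε - ε') / ε := by positivity
    have hle := sSup_DmaxSet_mul_le_sInf_DHset hρ hρtr hε' hεε' hε1 hne
    rw [DH, Dmax, if_pos (hc.trans_le hle), if_pos hS, ← EReal.coe_add, EReal.coe_le_coe_iff]
    calc -Real.logb 2 (sInf (DHset ε ρ σ)) ≤ -Real.logb 2 (S * (ε - ε') / ε) :=
          neg_le_neg (Real.logb_le_logb_of_le one_lt_two hc hle)
      _ = -Real.logb 2 S + Real.logb 2 (ε / (ε - ε')) := by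
          rw [show S * (ε - ε') / ε = S / (ε / (ε - ε')) by field_simp,
            Real.logb_div hS.ne' (by positivity)]
          ring
  · rw [Dmax, if_neg hS, EReal.top_add_coe]
    exact le_top

/-- `D_H^ε(ρ‖σ) ≤ D_max^{ε'}(ρ‖σ) + log₂(ε/(ε-ε'))`. -/
theorem DH_le_Dmax
    {ι : Type*} [Fintype ι] [DecidableEq ι]
    (ρ σ : Matrix ι ι ℂ) (hρ : ρ.PosSemidef) (hρtr : ρ.trace = 1) (hσ : σ.PosSemidef)
    (ε ε' : ℝ) (hε' : 0 ≤ ε') (hεε' : ε' < ε) (hε1 : ε ≤ 1) :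
    DH ε ρ σ ≤ Dmax ε' ρ σ + ((Real.logb 2 (ε / (ε - ε')) : ℝ) : EReal) :=
  DH_le_Dmax_general ρ σ hρ hρtr ε ε' hε' hεε' hε1

end QMarkov
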